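/- arXiv:1706.05289 — 2 statements merged into one kernel-verified Lean document; each statement's English description precedes it below -/
import Mathlib

section
/- For every N ≥ 1 and every x ∈ ℂ with |x| = 1, |Σ_{n=1}^N ε_n x^n| ≤ 2(1 + √2)·N^{1/2} (the root-N property). -/
/-!
On the unit circle the parallelogram law gives `|P_k|² + |Q_k|² = 2^(k+1)`. The first `2^k`
coefficients of `P_{k+1}` and `Q_{k+1}` are those of `P_k`, the next ones are `±σ_k` times those
of `Q_k`; so a partial sum of length `M ∈ (2^k, 2^(k+1)]` of `P_{k+1}` or `Q_{k+1}` is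
`P_k(x) ± σ_k x^(2^k)` times a partial sum of length `M - 2^k` of `Q_k`. An induction on `k` with
the bound `c √M` then closes because `√(2·2^k) + c √m ≤ c √(2^k + m)` for `m ≤ 2^k`, as soon as
`c ≥ √2 (1 + √2)`.
-/

open Polynomial Finset

/-- The pair of polynomial sequences `(P_k, Q_k)` defined by `P_0 = Q_0 = X` and
`P_{k+1} = P_k + σ_k x^{2^k} Q_k`, `Q_{k+1} = P_k - σ_k x^{2^k} Q_k`. -/
noncomputable def PQ (σ : ℕ → ℤ) : ℕ → Polynomial ℂ × Polynomial ℂ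
  | 0 => (Polynomial.X, Polynomial.X)
  | k + 1 =>
      ((PQ σ k).1 + Polynomial.C ((σ k : ℂ)) * Polynomial.X ^ 2 ^ k * (PQ σ k).2,
       (PQ σ k).1 - Polynomial.C ((σ k : ℂ)) * Polynomial.X ^ 2 ^ k * (PQ σ k).2)

theorem sqrt_two_mul_add_mul_sqrt_le {a m c : ℝ} (hm : 0 ≤ m) (hma : m ≤ a)
    (hc : √2 * (1 + √2) ≤ c) : √(2 * a) + c * √m ≤ c * √(a + m) := by
  obtain ⟨s, hs0, rfl⟩ : ∃ s, 0 ≤ s ∧ a = s ^ 2 :=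
    ⟨√a, Real.sqrt_nonneg a, (Real.sq_sqrt (hm.trans hma)).symm⟩
  obtain ⟨t, ht0, rfl⟩ : ∃ t, 0 ≤ t ∧ m = t ^ 2 := ⟨√m, Real.sqrt_nonneg m, (Real.sq_sqrt hm).symm⟩
  set u := √(s ^ 2 + t ^ 2)
  have hu0 : 0 ≤ u := Real.sqrt_nonneg _
  have hu2 : u ^ 2 = s ^ 2 + t ^ 2 := Real.sq_sqrt (by positivity)
  have hts : t ≤ s := (pow_le_pow_iff_left₀ ht0 hs0 two_ne_zero).1 hma
  have h2s : √(2 * s ^ 2) = √2 * s := by rw [Real.sqrt_mul zero_le_two, Real.sqrt_sq hs0]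
  have hus : u ≤ √2 * s := h2s ▸ Real.sqrt_le_sqrt (by linarith)
  rw [h2s, Real.sqrt_sq ht0]
  have h2 : 0 ≤ √2 := Real.sqrt_nonneg 2
  -- `u - t = s ^ 2 / (u + t)` and `u + t ≤ (1 + √2) s`
  have key : √2 * s * (u + t) ≤ c * (u - t) * (u + t) :=
    calc √2 * s * (u + t) ≤ √2 * (1 + √2) * s ^ 2 := by nlinarith
      _ ≤ c * s ^ 2 := by gcongr
      _ = c * (u - t) * (u + t) := by rw [show s ^ 2 = (u - t) * (u + t) by nlinarith]; ring
  rcases (add_nonneg hu0 ht0).eq_or_lt with h | h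
  · have hs : s = 0 := by nlinarith
    have hut : u = t := by nlinarith
    simp [hs, hut]
  · nlinarith [le_of_mul_le_mul_right key h]

namespace Polynomial

section PartialEval

variable {R : Type*} [CommSemiring R]

def partialEval (p : R[X]) (M : ℕ) (x : R) : R :=
  ∑ n ∈ Icc 1 M, p.coeff n * x ^ n

@[simp]
theorem partialEval_zero (p : R[X]) (x : R) : p.partialEval 0 x = 0 := by
  simp [partialEval]

theorem partialEval_succ (p : R[X]) (M : ℕ) (x : R) :
    p.partialEval (M + 1) x = p.partialEval M x + p.coeff (M + 1) * x ^ (M + 1) :=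
  sum_Icc_succ_top (by omega) _

theorem partialEval_add (p q : R[X]) (M : ℕ) (x : R) :
    (p + q).partialEval M x = p.partialEval M x + q.partialEval M x := by
  simp only [partialEval, coeff_add, add_mul, sum_add_distrib]

theorem partialEval_C_mul_X_pow_mul {q : R[X]} (hq : q.coeff 0 = 0) (τ : R) (a M : ℕ)
    (x : R) : (C τ * X ^ a * q).partialEval M x = τ * x ^ a * q.partialEval (M - a) x := by
  induction M with
  | zero => simp
  | succ M ih =>
    rw [partialEval_succ, ih, mul_assoc (C τ), coeff_C_mul, coeff_X_pow_mul']
    rcases Nat.lt_or_ge M a with hMa | hMa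
    · obtain hlt | rfl := Nat.lt_or_eq_of_le (Nat.succ_le_of_lt hMa)
      · simp [Nat.sub_eq_zero_of_le hMa.le, Nat.sub_eq_zero_of_le hlt.le, hlt.not_ge]
      · simp [hq]
    · rw [if_pos (by omega), show M + 1 - a = M - a + 1 by omega, partialEval_succ,
        show M + 1 = a + (M - a + 1) by omega, pow_add]
      ring

theorem partialEval_eq_eval {p : R[X]} (h0 : p.coeff 0 = 0) {M : ℕ} (hM : p.natDegree ≤ M)
    (x : R) : p.partialEval M x = p.eval x := by
  rw [eval_eq_sum_range' (Nat.lt_succ_of_le hM), sum_range_succ', partialEval,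
    ← Ico_add_one_right_eq_Icc, sum_Ico_eq_sum_range]
  simp [h0, add_comm]

end PartialEval

theorem norm_partialEval_add_C_mul_X_pow_mul_le {p q : ℂ[X]} {a : ℕ} {τ x : ℂ} {c : ℝ}
    (hc : √2 * (1 + √2) ≤ c) (hp0 : p.coeff 0 = 0) (hq0 : q.coeff 0 = 0)
    (hpa : p.natDegree ≤ a) (hpx : ‖p.eval x‖ ≤ √(2 * a))
    (hp : ∀ M ≤ a, ‖p.partialEval M x‖ ≤ c * √M) (hq : ∀ M ≤ a, ‖q.partialEval M x‖ ≤ c * √M)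
    (hτ : ‖τ‖ = 1) (hx : ‖x‖ = 1) {M : ℕ} (hM : M ≤ 2 * a) :
    ‖(p + C τ * X ^ a * q).partialEval M x‖ ≤ c * √M := by
  rw [partialEval_add, partialEval_C_mul_X_pow_mul hq0]
  rcases le_total M a with hMa | haM
  · simpa [Nat.sub_eq_zero_of_le hMa] using hp M hMa
  obtain ⟨m, rfl⟩ := Nat.exists_eq_add_of_le haM
  rw [partialEval_eq_eval hp0 (hpa.trans haM), Nat.add_sub_cancel_left]
  calc ‖p.eval x + τ * x ^ a * q.partialEval m x‖
      ≤ √(2 * a) + c * √m := by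
        refine (norm_add_le _ _).trans (add_le_add hpx ?_)
        simpa [hτ, hx] using hq m (by omega)
    _ ≤ c * √(a + m : ℕ) := by
        push_cast
        exact sqrt_two_mul_add_mul_sqrt_le m.cast_nonneg (by norm_cast; omega) hc

end Polynomial

section PQ

variable (σ : ℕ → ℤ)

theorem PQ_succ_snd (k : ℕ) :
    (PQ σ (k + 1)).2 = (PQ σ k).1 + C (-(σ k : ℂ)) * X ^ 2 ^ k * (PQ σ k).2 := by
  simp only [PQ, C_neg, neg_mul, sub_eq_add_neg]

theorem PQ_coeff_zero (k : ℕ) : (PQ σ k).1.coeff 0 = 0 ∧ (PQ σ k).2.coeff 0 = 0 := by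
  induction k with
  | zero => simp [PQ]
  | succ k ih => simp [PQ, ih]

theorem PQ_natDegree_le (k : ℕ) :
    (PQ σ k).1.natDegree ≤ 2 ^ k ∧ (PQ σ k).2.natDegree ≤ 2 ^ k := by
  induction k with
  | zero => simp [PQ]
  | succ k ih =>
    have hP : (PQ σ k).1.natDegree ≤ 2 ^ (k + 1) :=
      ih.1.trans (Nat.pow_le_pow_right two_pos k.le_succ)
    have hQ (τ : ℂ) : (C τ * X ^ 2 ^ k * (PQ σ k).2).natDegree ≤ 2 ^ (k + 1) := by
      have := natDegree_C_mul_X_pow_le τ (2 ^ k)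
      exact natDegree_mul_le.trans (by rw [pow_succ]; omega)
    rw [PQ_succ_snd]
    exact ⟨natDegree_add_le_of_degree_le hP (hQ _), natDegree_add_le_of_degree_le hP (hQ _)⟩

variable {σ}

theorem norm_eval_PQ_sq_add (hσ : ∀ k, σ k = 1 ∨ σ k = -1) {x : ℂ} (hx : ‖x‖ = 1) (k : ℕ) :
    ‖(PQ σ k).1.eval x‖ ^ 2 + ‖(PQ σ k).2.eval x‖ ^ 2 = 2 ^ (k + 1) := by
  induction k with
  | zero => simp [PQ, hx]; norm_num
  | succ k ih =>
    have hσx : ‖(σ k : ℂ) * x ^ 2 ^ k‖ = 1 := by rcases hσ k with h | h <;> simp [h, hx]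
    simp only [PQ, eval_add, eval_sub, eval_mul, eval_C, eval_pow, eval_X]
    rw [parallelogram_law_with_norm ℝ, norm_mul, hσx, one_mul, ih, pow_succ 2 (k + 1)]
    ring

theorem norm_eval_PQ_fst_le (hσ : ∀ k, σ k = 1 ∨ σ k = -1) {x : ℂ} (hx : ‖x‖ = 1)
    (k : ℕ) : ‖(PQ σ k).1.eval x‖ ≤ √(2 * 2 ^ k) := by
  rw [← pow_succ', ← norm_eval_PQ_sq_add hσ hx k]
  exact Real.le_sqrt_of_sq_le (le_add_of_nonneg_right (sq_nonneg _))

theorem norm_partialEval_PQ_le (hσ : ∀ k, σ k = 1 ∨ σ k = -1) {x : ℂ}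
    (hx : ‖x‖ = 1) {c : ℝ} (hc : √2 * (1 + √2) ≤ c) (k : ℕ) :
    ∀ M ≤ 2 ^ k, ‖(PQ σ k).1.partialEval M x‖ ≤ c * √M ∧
      ‖(PQ σ k).2.partialEval M x‖ ≤ c * √M := by
  induction k with
  | zero =>
    have hc1 : 1 ≤ c := by nlinarith [Real.one_lt_sqrt_two, Real.sqrt_nonneg 2]
    intro M hM
    interval_cases M <;> simp [PQ, partialEval, hx, hc1]
  | succ k ih =>
    intro M hM
    have step (τ : ℂ) (hτ : ‖τ‖ = 1) :
        ‖((PQ σ k).1 + C τ * X ^ 2 ^ k * (PQ σ k).2).partialEval M x‖ ≤ c * √M :=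
      norm_partialEval_add_C_mul_X_pow_mul_le hc (PQ_coeff_zero σ k).1 (PQ_coeff_zero σ k).2
        (PQ_natDegree_le σ k).1 (by exact_mod_cast norm_eval_PQ_fst_le hσ hx k)
        (fun M hM => (ih M hM).1) (fun M hM => (ih M hM).2) hτ hx
        (by rw [pow_succ] at hM; omega)
    have hσk : ‖(σ k : ℂ)‖ = 1 := by rcases hσ k with h | h <;> simp [h]
    rw [PQ_succ_snd]
    exact ⟨step _ hσk, step _ (by rwa [norm_neg])⟩

end PQ

/-- The root-N property: the sequence `ε` of coefficients of the `P_k` (which is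
well defined, as `ε n` is the coefficient of `x^n` in `P_k` for any `k` with
`n ≤ 2^k`) satisfies `|∑_{n=1}^N ε_n x^n| ≤ 2(1+√2)·√N` for all `|x| = 1`. -/
theorem stmt4 (σ : ℕ → ℤ) (hσ : ∀ k, σ k = 1 ∨ σ k = -1) (ε : ℕ → ℂ)
    (hε : ∀ n k : ℕ, 1 ≤ n → n ≤ 2 ^ k → ε n = (PQ σ k).1.coeff n) :
    ∀ N : ℕ, 1 ≤ N → ∀ x : ℂ, ‖x‖ = 1 →
      ‖∑ n ∈ Finset.Icc 1 N, ε n * x ^ n‖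
        ≤ 2 * (1 + Real.sqrt 2) * Real.sqrt N := by
  intro N _ x hx
  have hN : N ≤ 2 ^ N := N.lt_two_pow_self.le
  have hsum : ∑ n ∈ Icc 1 N, ε n * x ^ n = (PQ σ N).1.partialEval N x :=
    sum_congr rfl fun n hn => by rw [hε n N (mem_Icc.1 hn).1 ((mem_Icc.1 hn).2.trans hN)]
  have hc : √2 * (1 + √2) ≤ 2 * (1 + √2) := by
    nlinarith [Real.sqrt_nonneg 2, Real.sq_sqrt zero_le_two]
  rw [hsum]
  exact (norm_partialEval_PQ_le hσ hx hc N N hN).1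
end

section
/- For every finite sequence of signs σ_0, …, σ_{k−1} ∈ {1, −1}, every contiguous subword u of length 4 of the word (S_{σ_0} ∘ S_{σ_1} ∘ ⋯ ∘ S_{σ_{k−1}})(A) all of whose letters lie in {A, B} (i.e., φ(u) = 1111) equals BABA; that is, BABA is the unique preimage of 1111 under φ among legal words. Here S_σ denotes S₊ if σ = 1 and S₋ if σ = −1. -/
/-- The four-letter alphabet `{A, B, Ā, B̄}`. -/
inductive Letter : Type
  | A | B | Abar | Bbar
  deriving DecidableEq, Repr

/-- The substitution `S₊ : A ↦ AB, B ↦ AB̄, Ā ↦ ĀB̄, B̄ ↦ ĀB`. -/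
def Splus : Letter → List Letter
  | .A => [.A, .B]
  | .B => [.A, .Bbar]
  | .Abar => [.Abar, .Bbar]
  | .Bbar => [.Abar, .B]

/-- The substitution `S₋ : A ↦ AB̄, B ↦ AB, Ā ↦ ĀB, B̄ ↦ ĀB̄`. -/
def Sminus : Letter → List Letter
  | .A => [.A, .Bbar]
  | .B => [.A, .B]
  | .Abar => [.Abar, .B]
  | .Bbar => [.Abar, .Bbar]

/-- `S_σ` is `S₊` if `σ = 1` and `S₋` otherwise (in particular if `σ = -1`). -/
def Ssign (s : ℤ) : Letter → List Letter :=
  if s = 1 then Splus else Sminus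

/-- `comp σ k u = (S_{σ_0} ∘ S_{σ_1} ∘ ⋯ ∘ S_{σ_{k-1}})(u)`. -/
def comp (σ : ℕ → ℤ) : ℕ → List Letter → List Letter
  | 0, u => u
  | k + 1, u => comp σ k (u.flatMap (Ssign (σ k)))

/-- The factor map `φ : A, B ↦ 1`, `Ā, B̄ ↦ -1`. -/
def phi : Letter → ℂ
  | .A => 1
  | .B => 1
  | .Abar => -1
  | .Bbar => -1

/-!
Each `S_σ` sends a letter to a two-letter block whose first letter is `A` or `Ā` and whose second
is `B` or `B̄`, so the letters of an image word alternate between these two kinds. A factor with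
`φ`-image `1111` is therefore `ABAB` or `BABA`. An occurrence of `ABAB` must start at a block
boundary, so it is the image of a square `xx` (each `S_σ` is injective on letters); but the
preimage of `comp σ (k + 1) A` is `A` or itself an image word, so it contains no square.
-/

def isA : Letter → Bool
  | .A | .Abar => true
  | .B | .Bbar => false

lemma eq_A_or_B_of_phi_eq_one {a : Letter} (h : phi a = 1) : a = .A ∨ a = .B := by
  cases a <;> norm_num [phi] at h <;> simp

lemma Ssign_eq_pair (s : ℤ) (a : Letter) :
    ∃ α β, Ssign s a = [α, β] ∧ isA α = true ∧ isA β = false := by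
  unfold Ssign
  split <;> cases a <;> exact ⟨_, _, rfl, rfl, rfl⟩

lemma Ssign_injective (s : ℤ) : Function.Injective (Ssign s) := by
  unfold Ssign
  split <;> intro a b h <;> cases a <;> cases b <;> first | rfl | cases h

lemma head?_flatMap_Ssign (s : ℤ) (v : List Letter) :
    ∀ y ∈ (v.flatMap (Ssign s)).head?, isA y = true := by
  cases v with
  | nil => simp
  | cons a v =>
    obtain ⟨α, β, hab, hα, -⟩ := Ssign_eq_pair s a
    simpa [hab] using hα

lemma isChain_flatMap_Ssign (s : ℤ) (v : List Letter) :
    (v.flatMap (Ssign s)).IsChain (fun a b => isA a ≠ isA b) := by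
  induction v with
  | nil => exact List.isChain_nil
  | cons a v ih =>
    obtain ⟨α, β, hab, hα, hβ⟩ := Ssign_eq_pair s a
    rw [List.flatMap_cons, hab, List.cons_append, List.cons_append, List.nil_append,
      List.isChain_cons_cons, List.isChain_cons]
    refine ⟨by simp [hα, hβ], fun y hy => ?_, ih⟩
    simp [hβ, head?_flatMap_Ssign s v y hy]

lemma eq_ABAB_or_BABA {u : List Letter} (hlen : u.length = 4) (hAB : ∀ a ∈ u, a = .A ∨ a = .B)
    (halt : u.IsChain (fun a b => isA a ≠ isA b)) :
    u = [.A, .B, .A, .B] ∨ u = [.B, .A, .B, .A] := by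
  match u, hlen with
  | [a, b, c, d], _ =>
    simp only [List.mem_cons, List.not_mem_nil, or_false, forall_eq_or_imp, forall_eq] at hAB
    obtain ⟨ha | ha, hb | hb, hc | hc, hd | hd⟩ := hAB <;> subst ha hb hc hd <;>
      simp_all [isA]

lemma exists_square_infix_of_ABAB_infix {s : ℤ} {v : List Letter}
    (h : [.A, .B, .A, .B] <:+: v.flatMap (Ssign s)) : ∃ x, [x, x] <:+: v := by
  induction v with
  | nil => simp at h
  | cons a v ih =>
    obtain ⟨α, β, hab, -, hβ⟩ := Ssign_eq_pair s a
    rw [List.flatMap_cons, hab, List.cons_append, List.cons_append, List.nil_append,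
      List.infix_cons_iff, List.infix_cons_iff] at h
    rcases h with hpre | hpre | hinf
    · obtain ⟨rfl, rfl, hpre⟩ : Letter.A = α ∧ Letter.B = β ∧ _ := by simpa using hpre
      cases v with
      | nil => simp at hpre
      | cons b v =>
        obtain ⟨γ, δ, hcd, -, -⟩ := Ssign_eq_pair s b
        obtain ⟨rfl, rfl⟩ : Letter.A = γ ∧ Letter.B = δ := by simpa [hcd] using hpre
        obtain rfl : a = b := Ssign_injective s (hab.trans hcd.symm)
        exact ⟨a, (List.prefix_append [a, a] _).isInfix⟩
    · simp only [List.cons_prefix_cons] at hpre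
      simp [← hpre.1, isA] at hβ
    · obtain ⟨x, hx⟩ := ih hinf
      exact ⟨x, hx.trans (List.infix_cons List.infix_rfl)⟩

lemma comp_succ (σ : ℕ → ℤ) (k : ℕ) (u : List Letter) :
    comp σ (k + 1) u = (comp (fun n => σ (n + 1)) k u).flatMap (Ssign (σ 0)) := by
  induction k generalizing u with
  | zero => rfl
  | succ k ih => exact ih (u.flatMap (Ssign (σ (k + 1))))

lemma not_square_infix_comp (σ : ℕ → ℤ) (k : ℕ) (x : Letter) :
    ¬ [x, x] <:+: comp σ k [.A] := by
  cases k with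
  | zero => exact fun h => by simpa [comp] using h.length_le
  | succ k =>
    rw [comp_succ]
    intro h
    simpa using (isChain_flatMap_Ssign _ _).infix h

theorem stmt14_general (σ : ℕ → ℤ) (k : ℕ)
    (u : List Letter) (hlen : u.length = 4) (hinfix : u <:+: comp σ k [Letter.A])
    (hone : ∀ a ∈ u, phi a = 1) :
    u = [Letter.B, Letter.A, Letter.B, Letter.A] := by
  cases k with
  | zero => simpa [comp, hlen] using hinfix.length_le
  | succ k =>
    rw [comp_succ] at hinfix
    have hAB : ∀ a ∈ u, a = .A ∨ a = .B := fun a ha => eq_A_or_B_of_phi_eq_one (hone a ha)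
    rcases eq_ABAB_or_BABA hlen hAB ((isChain_flatMap_Ssign _ _).infix hinfix) with rfl | rfl
    · obtain ⟨x, hx⟩ := exists_square_infix_of_ABAB_infix hinfix
      exact absurd hx (not_square_infix_comp _ k x)
    · rfl

/-- Every contiguous subword of length `4` of `(S_{σ_0} ∘ ⋯ ∘ S_{σ_{k-1}})(A)`
all of whose letters lie in `{A, B}` (i.e. with `φ`-image `1111`) equals `BABA`. -/
theorem stmt14 (σ : ℕ → ℤ) (hσ : ∀ k, σ k = 1 ∨ σ k = -1) (k : ℕ)
    (u : List Letter) (hlen : u.length = 4) (hinfix : u <:+: comp σ k [Letter.A])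
    (hone : ∀ a ∈ u, phi a = 1) :
    u = [Letter.B, Letter.A, Letter.B, Letter.A] :=
  stmt14_general σ k u hlen hinfix hone
end
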